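/- (Kummer curve, direction λ₀) Let 0 < λ₀ < λ∞. Define F_0(λ₀,λ∞) = ((λ∞+λ₀)²/2)·log(λ∞+λ₀) + ((λ∞−λ₀)²/2)·log(λ∞−λ₀) − 2λ₀²·log(2λ₀) − (3/2)(λ∞²−λ₀²), F_1(λ₀,λ∞) = −(1/12)·log((λ∞²−λ₀²)/λ₀), and F_g(λ₀,λ∞) = (B_{2g}/(2g(2g−2)))·( (λ₀+λ∞)^{2−2g} + (λ₀−λ∞)^{2−2g} − (2λ₀)^{2−2g} ) for g ≥ 2. Then for every integer n ≥ 1, Σ_{k=1}^{n} (2/(2k)!) · ∂_{λ₀}^{2k} F_{n−k}(λ₀,λ∞) = log((λ∞+λ₀)(λ∞−λ₀)) − 4·log(2λ₀) if n = 1, and = (1/(n−1))·(2λ₀)^{2−2n} if n ≥ 2. (That is, the free energy of the Kummer spectral curve satisfies F(λ₀+ℏ, λ∞) − 2F(λ₀,λ∞) + F(λ₀−ℏ, λ∞) = log((λ∞+λ₀)(λ∞−λ₀)) − 2log(2λ₀) − log(2λ₀+ℏ) − log(2λ₀−ℏ) order by order in ℏ, using log(2λ₀+ℏ)+log(2λ₀−ℏ)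 = 2log(2λ₀) − Σ_{m≥1}(1/m)(ℏ/(2λ₀))^{2m}.) -/

import Mathlib

/-!
Write `G_g` for `barnesFreeEnergy g`. On `0 < λ₀ < λ∞`,
`F_g(λ₀) = G_g(λ₀ + λ∞) + G_g(λ₀ - λ∞) - G_g(2λ₀)` up to an additive constant, and for `k ≥ 1`,
`g + k = n ≥ 2` the derivative `∂^{2k} G_g(u)` is `c_{g,k} u^{2-2n}` with
`c_{g,k} = barnesDerivCoeff g k`. So for `n ≥ 2` the sum is
`(Σ_k 2/(2k)! c_{n-k,k}) ((λ₀+λ∞)^{2-2n} + (λ₀-λ∞)^{2-2n})`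
minus `(Σ_k 2/(2k)! 4^k c_{n-k,k}) (2λ₀)^{2-2n}`.
Up to the factor `2 (2n-3)!/(2n)!`, the two coefficient sums are the values at `t = 1` and `t = 2`
of `Σ_{j<N} C(N,j) (j-1) B_j t^{N-j}` with `N = 2n` (its odd terms vanish), and this polynomial is
`(N-1) (B_N(t) - B_N) - N t B_{N-1}(t)` in terms of Bernoulli polynomials. It vanishes at `t = 1`
and, by `B_N(t+1) = B_N(t) + N t^{N-1}`, equals `-N(N-1)` at `t = 2`. For `n = 1` the sum is
`G_0''(λ₀+λ∞) + G_0''(λ₀-λ∞) - 4 G_0''(2λ₀)` with `G_0'' = log`.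
-/

open Finset Filter Topology

theorem sum_range_choose_mul_sub_one_mul_bernoulli (N : ℕ) (t : ℚ) :
    ∑ j ∈ range (N + 1), (N.choose j : ℚ) * ((j : ℚ) - 1) * bernoulli j * t ^ (N - j)
      = (N - 1) * (Polynomial.bernoulli N).eval t
        - N * t * (Polynomial.bernoulli (N - 1)).eval t := by
  have hB : (Polynomial.bernoulli N).eval t
      = ∑ j ∈ range (N + 1), bernoulli j * N.choose j * t ^ (N - j) := by
    simp [Polynomial.bernoulli, Polynomial.eval_finsetSum]
  have hD : N * t * (Polynomial.bernoulli (N - 1)).eval t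
      = ∑ j ∈ range (N + 1), bernoulli j * N.choose j * ((N - j : ℕ) * t ^ (N - j)) := by
    have := congrArg (fun p => t * p.eval t) (Polynomial.derivative_bernoulli N)
    simp only [Polynomial.eval_mul, Polynomial.eval_natCast] at this
    rw [mul_comm (N : ℚ) t, mul_assoc, ← this, Polynomial.bernoulli, Polynomial.derivative_sum,
      Polynomial.eval_finsetSum, mul_sum]
    refine sum_congr rfl fun j _ => ?_
    rw [Polynomial.derivative_monomial, Polynomial.eval_monomial]
    rcases Nat.eq_zero_or_pos (N - j) with h | h
    · simp [h]
    · rw [← pow_sub_one_mul h.ne']; ring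
  rw [hB, hD, mul_sum, ← sum_sub_distrib]
  refine sum_congr rfl fun j hj => ?_
  rw [Nat.cast_sub (Nat.lt_succ_iff.mp (mem_range.mp hj))]
  ring

theorem sum_range_two_mul_choose_mul_sub_one_mul_bernoulli (N n : ℕ) (t : ℚ) :
    ∑ j ∈ range (2 * n), (N.choose j : ℚ) * ((j : ℚ) - 1) * bernoulli j * t ^ (N - j)
      = ∑ g ∈ range n,
          (N.choose (2 * g) : ℚ) * (2 * g - 1) * bernoulli (2 * g) * t ^ (N - 2 * g) := by
  induction n with
  | zero => simp
  | succ n ih =>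
    rw [mul_add_one, sum_range_succ, sum_range_succ, ih, sum_range_succ]
    -- the odd term vanishes: `B_j = 0` for odd `j > 1`, and the factor `j - 1` kills `j = 1`
    rcases Nat.eq_zero_or_pos n with rfl | hn
    · simp
    · simp [bernoulli_eq_zero_of_odd (odd_two_mul_add_one n) (by omega)]

theorem Polynomial.bernoulli_eval_two {N : ℕ} (hN : N ≠ 1) :
    (bernoulli N).eval 2 = _root_.bernoulli N + N := by
  have h := Polynomial.bernoulli_eval_one_add N 1
  rw [one_add_one_eq_two, Polynomial.bernoulli_eval_one, one_pow, mul_one] at h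
  rw [h, bernoulli_eq_bernoulli'_of_ne_one hN]

noncomputable def barnesDerivCoeff (g k : ℕ) : ℚ :=
  bernoulli (2 * g) * (2 * g - 1) * (2 * (g + k) - 3).factorial / (2 * g).factorial

theorem sum_barnesDerivCoeff (n : ℕ) (s : ℚ) :
    ∑ k ∈ Icc 1 n, 2 / (2 * k).factorial * s ^ (2 * k) * barnesDerivCoeff (n - k) k
      = 2 * (2 * n - 3).factorial / (2 * n).factorial
        * ((2 * n - 1) * ((Polynomial.bernoulli (2 * n)).eval s - bernoulli (2 * n))
          - 2 * n * s * (Polynomial.bernoulli (2 * n - 1)).eval s) := by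
  have h := sum_range_choose_mul_sub_one_mul_bernoulli (2 * n) s
  rw [sum_range_succ, sum_range_two_mul_choose_mul_sub_one_mul_bernoulli] at h
  simp only [Nat.choose_self, Nat.sub_self, pow_zero, Nat.cast_one, one_mul, mul_one] at h
  push_cast at h
  have h' : ∑ g ∈ range n, ((2 * n).choose (2 * g) : ℚ) * (2 * g - 1) * bernoulli (2 * g)
        * s ^ (2 * n - 2 * g)
      = (2 * n - 1) * ((Polynomial.bernoulli (2 * n)).eval s - bernoulli (2 * n))
        - 2 * n * s * (Polynomial.bernoulli (2 * n - 1)).eval s := by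
    linear_combination h
  rw [← h', mul_sum]
  refine sum_nbij' (fun k => n - k) (fun g => n - g) ?_ ?_ ?_ ?_ ?_
  · intro k hk; simp only [mem_Icc, mem_range] at hk ⊢; omega
  · intro g hg; simp only [mem_Icc, mem_range] at hg ⊢; omega
  · intro k hk; simp only [mem_Icc] at hk; omega
  · intro g hg; simp only [mem_range] at hg; omega
  intro k hk
  simp only [mem_Icc] at hk
  obtain ⟨g, rfl⟩ : ∃ g, n = g + k := ⟨n - k, by omega⟩
  rw [Nat.add_sub_cancel, barnesDerivCoeff, Nat.cast_choose ℚ (by omega : 2 * g ≤ 2 * (g + k)),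
    show 2 * (g + k) - 2 * g = 2 * k by omega]
  have : (((2 * (g + k)).factorial : ℕ) : ℚ) ≠ 0 := by positivity
  field_simp

theorem sum_barnesDerivCoeff_one (n : ℕ) (hn : 2 ≤ n) :
    ∑ k ∈ Icc 1 n, 2 / (2 * k).factorial * barnesDerivCoeff (n - k) k = 0 := by
  have h := sum_barnesDerivCoeff n 1
  have hodd : bernoulli' (2 * n - 1) = 0 :=
    bernoulli'_eq_zero_of_odd (Nat.Even.sub_odd (by omega) (even_two_mul n) odd_one) (by omega)
  rw [Polynomial.bernoulli_eval_one, Polynomial.bernoulli_eval_one, hodd,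
    ← bernoulli_eq_bernoulli'_of_ne_one (by omega)] at h
  simpa using h

theorem sum_barnesDerivCoeff_two (n : ℕ) (hn : 2 ≤ n) :
    ∑ k ∈ Icc 1 n, 2 / (2 * k).factorial * 2 ^ (2 * k) * barnesDerivCoeff (n - k) k
      = -1 / (n - 1) := by
  rw [sum_barnesDerivCoeff n 2, Polynomial.bernoulli_eval_two (by omega),
    Polynomial.bernoulli_eval_two (by omega), bernoulli_eq_zero_of_odd
      (Nat.Even.sub_odd (by omega) (even_two_mul n) odd_one) (by omega)]
  obtain ⟨m, rfl⟩ : ∃ m, n = m + 2 := ⟨n - 2, by omega⟩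
  have hfac : ((2 * (m + 2)).factorial : ℚ)
      = (2 * m + 4) * (2 * m + 3) * (2 * m + 2) * (2 * m + 1).factorial := by
    rw [show 2 * (m + 2) = 2 * m + 1 + 1 + 1 + 1 by ring, Nat.factorial_succ, Nat.factorial_succ,
      Nat.factorial_succ]
    push_cast
    ring
  rw [hfac, show 2 * (m + 2) - 3 = 2 * m + 1 by omega, show 2 * (m + 2) - 1 = 2 * m + 3 by omega]
  have : ((2 * m + 1).factorial : ℚ) ≠ 0 := by positivity
  have : (m : ℚ) + 2 - 1 ≠ 0 := by rw [add_sub_assoc]; positivity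
  push_cast
  field_simp
  ring

theorem contDiffAt_zpow_of_ne_zero {𝕜 : Type*} [NontriviallyNormedField 𝕜] {n : WithTop ℕ∞}
    (e : ℤ) {x : 𝕜} (hx : x ≠ 0) : ContDiffAt 𝕜 n (fun y => y ^ e) x := by
  obtain ⟨m, rfl | rfl⟩ := Int.eq_nat_or_neg e
  · simpa using contDiffAt_id.pow m
  · simpa [inv_pow] using (contDiffAt_inv 𝕜 hx).pow m

theorem iteratedDeriv_comp_const_mul_of_contDiffOn {𝕜 F : Type*} [NontriviallyNormedField 𝕜]
    [NormedAddCommGroup F] [NormedSpace 𝕜 F] {f : 𝕜 → F} {s : Set 𝕜} {m : ℕ} {c x : 𝕜}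
    (hs : IsOpen s) (hf : ContDiffOn 𝕜 m f s) (hc : Set.MapsTo (c * ·) s s) (hx : x ∈ s) :
    iteratedDeriv m (fun y => f (c * y)) x = c ^ m • iteratedDeriv m f (c * x) := by
  rw [← iteratedDerivWithin_of_isOpen hs hx, ← iteratedDerivWithin_of_isOpen hs (hc hx)]
  exact iteratedDerivWithin_comp_const_smul hx hs.uniqueDiffOn hf c hc

theorem Real.iteratedDeriv_succ_log (m : ℕ) (x : ℝ) :
    iteratedDeriv (m + 1) Real.log x = (-1) ^ m * m.factorial * x ^ (-1 - m : ℤ) := by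
  rw [iteratedDeriv_succ', Real.deriv_log', iteratedDeriv_eq_iterate, iter_deriv_inv]

theorem prod_range_neg_sub_mul_factorial {R : Type*} [CommRing R] (j m : ℕ) :
    (∏ i ∈ range m, (-(j : R) - 1 - i)) * j.factorial = (-1) ^ m * (j + m).factorial := by
  induction m with
  | zero => simp
  | succ m ih =>
    rw [prod_range_succ, ← add_assoc, Nat.factorial_succ, pow_succ]
    push_cast at ih ⊢
    linear_combination (-(j : R) - 1 - m) * ih

-- As `Real.log u = log |u|`, `barnesFreeEnergy g (λ₀ - λ∞)` matches the `log (λ∞ - λ₀)` in `F_g`.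
noncomputable def barnesFreeEnergy : ℕ → ℝ → ℝ
  | 0, u => u ^ 2 / 2 * Real.log u - 3 / 4 * u ^ 2
  | 1, u => -(1 / 12) * Real.log u
  | g@(_ + 2), u => (bernoulli (2 * g) : ℝ) / (2 * g * (2 * g - 2)) * u ^ (2 - 2 * (g : ℤ))

theorem contDiffAt_barnesFreeEnergy (g : ℕ) {n : WithTop ℕ∞} {u : ℝ} (hu : u ≠ 0) :
    ContDiffAt ℝ n (barnesFreeEnergy g) u := by
  have hlog : ContDiffAt ℝ n Real.log u := Real.contDiffAt_log.2 hu
  match g with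
  | 0 =>
    exact (((contDiffAt_id.pow 2).div_const 2).mul hlog).sub
      (contDiffAt_const.mul (contDiffAt_id.pow 2))
  | 1 => exact contDiffAt_const.mul hlog
  | _ + 2 => exact contDiffAt_const.mul (contDiffAt_zpow_of_ne_zero _ hu)

theorem iteratedDeriv_add_two_barnesFreeEnergy_zero (m : ℕ) {u : ℝ} (hu : u ≠ 0) :
    iteratedDeriv (m + 2) (barnesFreeEnergy 0) u = iteratedDeriv m Real.log u := by
  have hderiv : ∀ v ≠ 0, HasDerivAt (barnesFreeEnergy 0) (v * Real.log v - v) v := by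
    intro v hv
    refine ((((hasDerivAt_pow 2 v).div_const 2).fun_mul (Real.hasDerivAt_log hv)).fun_sub
      ((hasDerivAt_pow 2 v).const_mul (3 / 4 : ℝ))).congr_deriv ?_
    field_simp
    ring
  have hderiv2 : ∀ v ≠ 0, deriv (deriv (barnesFreeEnergy 0)) v = Real.log v := by
    intro v hv
    have heq : deriv (barnesFreeEnergy 0) =ᶠ[𝓝 v] fun w => w * Real.log w - w :=
      eventually_of_mem (isOpen_ne.mem_nhds hv) fun w hw => (hderiv w hw).deriv
    rw [heq.deriv_eq, ((Real.hasDerivAt_mul_log hv).fun_sub (hasDerivAt_id' v)).deriv]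
    ring
  rw [iteratedDeriv_succ', iteratedDeriv_succ']
  exact EventuallyEq.iteratedDeriv_eq m
    (eventually_of_mem (isOpen_ne.mem_nhds hu) hderiv2)

theorem iteratedDeriv_barnesFreeEnergy_add_two (h k : ℕ) (u : ℝ) :
    iteratedDeriv (2 * k) (barnesFreeEnergy (h + 2)) u
      = barnesDerivCoeff (h + 2) k * u ^ (2 - 2 * ((h + 2 + k : ℕ) : ℤ)) := by
  have hprod : ∏ i ∈ range (2 * k), (((2 - 2 * ((h + 2 : ℕ) : ℤ) : ℤ) : ℝ) - i)
      = ∏ i ∈ range (2 * k), (-((2 * h + 1 : ℕ) : ℝ) - 1 - i) :=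
    prod_congr rfl fun i _ => by push_cast; ring
  have hfac := prod_range_neg_sub_mul_factorial (R := ℝ) (2 * h + 1) (2 * k)
  rw [pow_mul, neg_one_sq, one_pow, one_mul, ← hprod] at hfac
  have hfac2 : ((2 * (h + 2)).factorial : ℝ)
      = (2 * h + 4) * (2 * h + 3) * (2 * h + 2) * (2 * h + 1).factorial := by
    rw [show 2 * (h + 2) = 2 * h + 1 + 1 + 1 + 1 by ring, Nat.factorial_succ, Nat.factorial_succ,
      Nat.factorial_succ]
    push_cast
    ring
  rw [show barnesFreeEnergy (h + 2) = fun u => (bernoulli (2 * (h + 2)) : ℝ)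
      / (2 * (h + 2 : ℕ) * (2 * (h + 2 : ℕ) - 2)) * u ^ (2 - 2 * ((h + 2 : ℕ) : ℤ)) from rfl,
    iteratedDeriv_const_mul_field, iteratedDeriv_eq_iterate, iter_deriv_zpow, barnesDerivCoeff,
    show 2 * (h + 2 + k) - 3 = 2 * h + 1 + 2 * k by omega,
    show 2 - 2 * ((h + 2 : ℕ) : ℤ) - (2 * k : ℕ) = 2 - 2 * ((h + 2 + k : ℕ) : ℤ) by push_cast; ring]
  push_cast at hfac ⊢
  rw [← hfac, hfac2]
  have : ((2 * h + 1).factorial : ℝ) ≠ 0 := by positivity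
  have : (h : ℝ) + 2 - 1 ≠ 0 := by rw [add_sub_assoc]; positivity
  field_simp
  ring

theorem iteratedDeriv_barnesFreeEnergy (g k : ℕ) (hgk : 2 ≤ g + k) {u : ℝ} (hu : u ≠ 0) :
    iteratedDeriv (2 * k) (barnesFreeEnergy g) u
      = barnesDerivCoeff g k * u ^ (2 - 2 * ((g + k : ℕ) : ℤ)) := by
  match g with
  | 0 =>
    obtain ⟨j, hj⟩ : ∃ j, 2 * k = 2 * j + 1 + 1 + 2 := ⟨k - 2, by omega⟩
    rw [hj, iteratedDeriv_add_two_barnesFreeEnergy_zero _ hu, Real.iteratedDeriv_succ_log,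
      Odd.neg_one_pow (odd_two_mul_add_one j), barnesDerivCoeff,
      show 2 * (0 + k) - 3 = 2 * j + 1 by omega,
      show (-1 - (2 * j + 1 : ℕ) : ℤ) = 2 - 2 * ((0 + k : ℕ) : ℤ) by omega]
    simp
  | 1 =>
    obtain ⟨j, hj⟩ : ∃ j, 2 * k = 2 * j + 1 + 1 := ⟨k - 1, by omega⟩
    rw [show barnesFreeEnergy 1 = fun u => -(1 / 12) * Real.log u from rfl,
      iteratedDeriv_const_mul_field, hj, Real.iteratedDeriv_succ_log,
      Odd.neg_one_pow (odd_two_mul_add_one j), barnesDerivCoeff,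
      show 2 * (1 + k) - 3 = 2 * j + 1 by omega,
      show (-1 - (2 * j + 1 : ℕ) : ℤ) = 2 - 2 * ((1 + k : ℕ) : ℤ) by omega, bernoulli_two]
    push_cast
    norm_num [Nat.factorial]
    ring
  | h + 2 => exact iteratedDeriv_barnesFreeEnergy_add_two h k u

noncomputable def kummerFreeEnergy (li : ℝ) (g : ℕ) : ℝ → ℝ :=
  fun y => barnesFreeEnergy g (y + li) + barnesFreeEnergy g (y - li) - barnesFreeEnergy g (2 * y)

theorem iteratedDeriv_kummerFreeEnergy (li : ℝ) (g m : ℕ) {y : ℝ} (hp : y + li ≠ 0)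
    (hm : y - li ≠ 0) (hy : y ≠ 0) :
    iteratedDeriv m (kummerFreeEnergy li g) y
      = iteratedDeriv m (barnesFreeEnergy g) (y + li)
        + iteratedDeriv m (barnesFreeEnergy g) (y - li)
        - 2 ^ m * iteratedDeriv m (barnesFreeEnergy g) (2 * y) := by
  have hG : ContDiffOn ℝ m (barnesFreeEnergy g) {0}ᶜ :=
    fun u hu => (contDiffAt_barnesFreeEnergy g hu).contDiffWithinAt
  have h2 : Set.MapsTo ((2 : ℝ) * ·) {0}ᶜ {0}ᶜ := fun u hu => mul_ne_zero two_ne_zero hu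
  unfold kummerFreeEnergy
  rw [iteratedDeriv_fun_sub, iteratedDeriv_fun_add, iteratedDeriv_comp_add_const,
    iteratedDeriv_comp_sub_const,
    iteratedDeriv_comp_const_mul_of_contDiffOn isOpen_compl_singleton hG h2 hy, smul_eq_mul]
  · exact (contDiffAt_barnesFreeEnergy g hp).comp y (contDiffAt_id.add contDiffAt_const)
  · exact (contDiffAt_barnesFreeEnergy g hm).comp y (contDiffAt_id.sub contDiffAt_const)
  · exact ((contDiffAt_barnesFreeEnergy g hp).comp y (contDiffAt_id.add contDiffAt_const)).add
      ((contDiffAt_barnesFreeEnergy g hm).comp y (contDiffAt_id.sub contDiffAt_const))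
  · exact (contDiffAt_barnesFreeEnergy g (mul_ne_zero two_ne_zero hy)).comp y
      (contDiffAt_const.mul contDiffAt_id)

theorem iteratedDeriv_two_kummerFreeEnergy_zero (li : ℝ) {y : ℝ} (hp : y + li ≠ 0)
    (hm : y - li ≠ 0) (hy : y ≠ 0) :
    iteratedDeriv 2 (kummerFreeEnergy li 0) y
      = Real.log (y + li) + Real.log (y - li) - 4 * Real.log (2 * y) := by
  rw [iteratedDeriv_kummerFreeEnergy li 0 2 hp hm hy,
    iteratedDeriv_add_two_barnesFreeEnergy_zero 0 hp,
    iteratedDeriv_add_two_barnesFreeEnergy_zero 0 hm,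
    iteratedDeriv_add_two_barnesFreeEnergy_zero 0 (mul_ne_zero two_ne_zero hy)]
  norm_num

theorem sum_iteratedDeriv_kummerFreeEnergy (li : ℝ) (n : ℕ) (hn : 2 ≤ n) {y : ℝ}
    (hp : y + li ≠ 0) (hm : y - li ≠ 0) (hy : y ≠ 0) :
    ∑ k ∈ Icc 1 n,
        2 / ((2 * k).factorial : ℝ) * iteratedDeriv (2 * k) (kummerFreeEnergy li (n - k)) y
      = 1 / (n - 1) * (2 * y) ^ (2 - 2 * (n : ℤ)) := by
  have hterm : ∀ k ∈ Icc 1 n,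
      2 / ((2 * k).factorial : ℝ) * iteratedDeriv (2 * k) (kummerFreeEnergy li (n - k)) y
        = 2 / ((2 * k).factorial : ℝ) * barnesDerivCoeff (n - k) k
            * ((y + li) ^ (2 - 2 * (n : ℤ)) + (y - li) ^ (2 - 2 * (n : ℤ)))
          - 2 / ((2 * k).factorial : ℝ) * 2 ^ (2 * k) * barnesDerivCoeff (n - k) k
            * (2 * y) ^ (2 - 2 * (n : ℤ)) := by
    intro k hk
    rw [mem_Icc] at hk
    have hnk : n - k + k = n := Nat.sub_add_cancel hk.2
    rw [iteratedDeriv_kummerFreeEnergy li _ _ hp hm hy,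
      iteratedDeriv_barnesFreeEnergy _ _ (by omega) hp,
      iteratedDeriv_barnesFreeEnergy _ _ (by omega) hm,
      iteratedDeriv_barnesFreeEnergy _ _ (by omega) (mul_ne_zero two_ne_zero hy), hnk]
    ring
  have h1 := congrArg (Rat.cast : ℚ → ℝ) (sum_barnesDerivCoeff_one n hn)
  have h2 := congrArg (Rat.cast : ℚ → ℝ) (sum_barnesDerivCoeff_two n hn)
  push_cast at h1 h2
  rw [sum_congr rfl hterm, sum_sub_distrib, ← sum_mul, ← sum_mul, h1, h2]
  ring

theorem exists_eqOn_const_add_kummerFreeEnergy (F : ℕ → ℝ → ℝ → ℝ)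
    (hF0 : ∀ l0 li : ℝ, 0 < l0 → l0 < li →
      F 0 l0 li = (li + l0) ^ 2 / 2 * Real.log (li + l0)
        + (li - l0) ^ 2 / 2 * Real.log (li - l0)
        - 2 * l0 ^ 2 * Real.log (2 * l0) - 3 / 2 * (li ^ 2 - l0 ^ 2))
    (hF1 : ∀ l0 li : ℝ, 0 < l0 → l0 < li →
      F 1 l0 li = -(1 / 12) * Real.log ((li ^ 2 - l0 ^ 2) / l0))
    (hFg : ∀ g : ℕ, 2 ≤ g → ∀ l0 li : ℝ, 0 < l0 → l0 < li →
      F g l0 li = (bernoulli (2 * g) : ℝ) / (2 * (g : ℝ) * (2 * (g : ℝ) - 2))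
        * ((l0 + li) ^ (2 - 2 * (g : ℤ)) + (l0 - li) ^ (2 - 2 * (g : ℤ))
            - (2 * l0) ^ (2 - 2 * (g : ℤ))))
    (li : ℝ) (g : ℕ) :
    ∃ κ : ℝ,
      Set.EqOn (fun y => F g y li) (fun y => κ + kummerFreeEnergy li g y) (Set.Ioo 0 li) := by
  match g with
  | 0 =>
    refine ⟨0, fun y ⟨hy, hyl⟩ => ?_⟩
    have hlog : Real.log (y - li) = Real.log (li - y) := by rw [← Real.log_neg_eq_log, neg_sub]
    simp only [kummerFreeEnergy, barnesFreeEnergy, hF0 y li hy hyl, hlog, add_comm y li]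
    ring
  | 1 =>
    refine ⟨-(1 / 12) * Real.log 2, fun y ⟨hy, hyl⟩ => ?_⟩
    have hlog : Real.log (y - li) = Real.log (li - y) := by rw [← Real.log_neg_eq_log, neg_sub]
    have hp : li + y ≠ 0 := by linarith
    have hm : li - y ≠ 0 := by linarith
    simp only [kummerFreeEnergy, barnesFreeEnergy, hF1 y li hy hyl, hlog,
      show li ^ 2 - y ^ 2 = (li + y) * (li - y) by ring, Real.log_div (mul_ne_zero hp hm) hy.ne',
      Real.log_mul hp hm, Real.log_mul two_ne_zero hy.ne', add_comm y li]
    ring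
  | h + 2 =>
    refine ⟨0, fun y ⟨hy, hyl⟩ => ?_⟩
    simp only [kummerFreeEnergy, barnesFreeEnergy, hFg (h + 2) (by omega) y li hy hyl]
    ring

/-- (Kummer curve, direction λ₀) The free energy of the Kummer spectral curve
satisfies `F(λ₀+ℏ, λ∞) − 2F(λ₀,λ∞) + F(λ₀−ℏ, λ∞)
  = log((λ∞+λ₀)(λ∞−λ₀)) − 2log(2λ₀) − log(2λ₀+ℏ) − log(2λ₀−ℏ)`
order by order in `ℏ`. -/
theorem stmt15 (F : ℕ → ℝ → ℝ → ℝ)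
    (hF0 : ∀ l0 li : ℝ, 0 < l0 → l0 < li →
      F 0 l0 li = (li + l0) ^ 2 / 2 * Real.log (li + l0)
        + (li - l0) ^ 2 / 2 * Real.log (li - l0)
        - 2 * l0 ^ 2 * Real.log (2 * l0) - 3 / 2 * (li ^ 2 - l0 ^ 2))
    (hF1 : ∀ l0 li : ℝ, 0 < l0 → l0 < li →
      F 1 l0 li = -(1 / 12) * Real.log ((li ^ 2 - l0 ^ 2) / l0))
    (hFg : ∀ g : ℕ, 2 ≤ g → ∀ l0 li : ℝ, 0 < l0 → l0 < li →
      F g l0 li = (bernoulli (2 * g) : ℝ) / (2 * (g : ℝ) * (2 * (g : ℝ) - 2))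
        * ((l0 + li) ^ (2 - 2 * (g : ℤ)) + (l0 - li) ^ (2 - 2 * (g : ℤ))
            - (2 * l0) ^ (2 - 2 * (g : ℤ))))
    (n : ℕ) (hn : 1 ≤ n) (l0 li : ℝ) (h0 : 0 < l0) (h1 : l0 < li) :
    ∑ k ∈ Finset.Icc 1 n,
        2 / (Nat.factorial (2 * k) : ℝ)
          * iteratedDeriv (2 * k) (fun y => F (n - k) y li) l0
      = if n = 1 then Real.log ((li + l0) * (li - l0)) - 4 * Real.log (2 * l0)
        else 1 / ((n : ℝ) - 1) * (2 * l0) ^ (2 - 2 * (n : ℤ)) := by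
  have hp : l0 + li ≠ 0 := by linarith
  have hm : l0 - li ≠ 0 := by linarith
  have hderiv : ∀ k ∈ Icc 1 n, iteratedDeriv (2 * k) (fun y => F (n - k) y li) l0
      = iteratedDeriv (2 * k) (kummerFreeEnergy li (n - k)) l0 := by
    intro k hk
    obtain ⟨κ, hκ⟩ := exists_eqOn_const_add_kummerFreeEnergy F hF0 hF1 hFg li (n - k)
    rw [hκ.iteratedDeriv_of_isOpen isOpen_Ioo _ ⟨h0, h1⟩,
      iteratedDeriv_const_add (by rw [mem_Icc] at hk; omega)]
  rw [sum_congr rfl fun k hk => by rw [hderiv k hk]]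
  split_ifs with hn1
  · subst hn1
    rw [Icc_self, sum_singleton, Nat.sub_self,
      iteratedDeriv_two_kummerFreeEnergy_zero li hp hm h0.ne', add_comm l0 li,
      ← Real.log_neg_eq_log (l0 - li), neg_sub,
      Real.log_mul (x := li + l0) (by linarith) (by linarith)]
    norm_num
  · exact sum_iteratedDeriv_kummerFreeEnergy li n (by omega) hp hm h0.ne'
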